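/- Let T be a finite rooted ordered tree with N nodes and height H (the maximum number of edges on a root-to-leaf path), and let f ≥ 1 be an integer. Then f · |{v : the subtree rooted at v has more than f nodes}| ≤ (H+1)·N. (Hence the number of nodes that may carry skip values in the Enriched Depth First representation is O(N·H/f).) -/

import Mathlib

/-- A finite rooted ordered tree: a single constructor taking the list of subtrees. -/
inductive OTree where
  | node : List OTree → OTree

/-- The number of nodes of a tree. -/
def numNodes : OTree → ℕ
  | .node ts => 1 + (ts.attach.map fun ⟨t, _⟩ => numNodes t).sum

/-- The height of a tree: a leaf has height 0, and a node with children has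
height one plus the maximum height of its subtrees. -/
def height : OTree → ℕ
  | .node ts => (ts.attach.map fun ⟨t, _⟩ => height t + 1).foldr max 0

/-- The subtree of `T` rooted at the node addressed by a path of child indices
(0-based); `none` if the path is not a valid node address of `T`. -/
def subtreeAt : OTree → List ℕ → Option OTree
  | t, [] => some t
  | .node ts, n :: p =>
    match ts[n]? with
    | some t => subtreeAt t p
    | none => none

mutual
def bigPaths (f : ℕ) : OTree → List (List ℕ)
  | .node ts =>
    (if f < numNodes (.node ts) then [[]] else []) ++ bigPathsL f ts 0

def bigPathsL (f : ℕ) : List OTree → ℕ → List (List ℕ)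
  | [], _ => []
  | t :: ts, k => (bigPaths f t).map (k :: ·) ++ bigPathsL f ts (k + 1)
end

lemma numNodes_node (ts : List OTree) :
    numNodes (.node ts) = 1 + (ts.map numNodes).sum := by
  rw [numNodes]; simp

lemma height_node (ts : List OTree) :
    height (.node ts) = (ts.map fun t => height t + 1).foldr max 0 := by
  rw [height]; congr 1; simp

lemma le_foldr_max (l : List ℕ) (x : ℕ) (hx : x ∈ l) : x ≤ l.foldr max 0 := by
  induction l with
  | nil => simp at hx
  | cons a l ih =>
    rcases List.mem_cons.mp hx with h | h
    · subst h; simp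
    · exact le_trans (ih h) (by simp)

lemma height_child_le {t : OTree} {ts : List OTree} (h : t ∈ ts) :
    height t + 1 ≤ height (.node ts) := by
  rw [height_node]
  exact le_foldr_max _ _ (List.mem_map.mpr ⟨t, h, rfl⟩)

@[simp] lemma subtreeAt_nil (t : OTree) : subtreeAt t [] = some t := by
  obtain ⟨ts⟩ := t; rw [subtreeAt]

lemma subtreeAt_cons (ts : List OTree) (n : ℕ) (p : List ℕ) :
    subtreeAt (.node ts) (n :: p) = ts[n]?.bind (fun t => subtreeAt t p) := by
  rw [subtreeAt]
  cases ts[n]? <;> simp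

mutual
theorem mem_bigPaths (f : ℕ) (t : OTree) (p : List ℕ) :
    p ∈ bigPaths f t ↔ ∃ s, subtreeAt t p = some s ∧ f < numNodes s := by
  obtain ⟨ts⟩ := t
  rw [bigPaths]
  constructor
  · intro hp
    rcases List.mem_append.mp hp with h | h
    · have hbig : f < numNodes (.node ts) := by
        by_contra hb; simp [hb] at h
      have hpe : p = [] := by
        split at h <;> simpa using h
      exact ⟨_, by simp [hpe], hbig⟩
    · obtain ⟨n, q, s, hpe, u, hu, hs, hbig⟩ := (mem_bigPathsL f ts 0 p).mp h
      refine ⟨s, ?_, hbig⟩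
      rw [hpe, subtreeAt_cons]
      simpa [hu] using hs
  · rintro ⟨s, hs, hbig⟩
    match p with
    | [] =>
      simp at hs
      subst hs
      simp [hbig]
    | n :: q =>
      rw [subtreeAt_cons] at hs
      rcases hu : ts[n]? with _ | u
      · simp [hu] at hs
      · rw [hu] at hs; simp at hs
        refine List.mem_append.mpr (Or.inr ?_)
        exact (mem_bigPathsL f ts 0 (n :: q)).mpr ⟨n, q, s, by simp, u, hu, hs, hbig⟩

theorem mem_bigPathsL (f : ℕ) (ts : List OTree) (k : ℕ) (p : List ℕ) :
    p ∈ bigPathsL f ts k ↔ ∃ n q s, p = (k + n) :: q ∧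
      ∃ u, ts[n]? = some u ∧ subtreeAt u q = some s ∧ f < numNodes s := by
  match ts with
  | [] => simp [bigPathsL]
  | t :: ts =>
    rw [bigPathsL]
    constructor
    · intro hp
      rcases List.mem_append.mp hp with h | h
      · obtain ⟨q, hq, hpe⟩ := List.mem_map.mp h
        obtain ⟨s, hs, hbig⟩ := (mem_bigPaths f t q).mp hq
        exact ⟨0, q, s, by simpa using hpe.symm, t, by simp, hs, hbig⟩
      · obtain ⟨n, q, s, hpe, u, hu, hs, hbig⟩ := (mem_bigPathsL f ts (k + 1) p).mp h
        refine ⟨n + 1, q, s, by rw [hpe]; congr 1; omega, u, by simpa using hu, hs, hbig⟩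
    · rintro ⟨n, q, s, hpe, u, hu, hs, hbig⟩
      match n with
      | 0 =>
        simp at hu
        subst hu
        refine List.mem_append.mpr (Or.inl (List.mem_map.mpr ⟨q, ?_, by simp [hpe]⟩))
        exact (mem_bigPaths f t q).mpr ⟨s, hs, hbig⟩
      | n + 1 =>
        refine List.mem_append.mpr (Or.inr ?_)
        refine (mem_bigPathsL f ts (k + 1) p).mpr ⟨n, q, s, by rw [hpe]; congr 1; omega, u, by simpa using hu, hs, hbig⟩
end

mutual
theorem nodup_bigPaths (f : ℕ) (t : OTree) : (bigPaths f t).Nodup := by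
  obtain ⟨ts⟩ := t
  rw [bigPaths]
  refine List.Nodup.append ?_ (nodup_bigPathsL f ts 0) ?_
  · split <;> simp
  · intro p hp hp'
    have hpe : p = [] := by split at hp <;> simp at hp; exact hp
    obtain ⟨n, q, s, hpe', _⟩ := (mem_bigPathsL f ts 0 p).mp hp'
    simp [hpe] at hpe'

theorem nodup_bigPathsL (f : ℕ) (ts : List OTree) (k : ℕ) : (bigPathsL f ts k).Nodup := by
  match ts with
  | [] => simp [bigPathsL]
  | t :: ts =>
    rw [bigPathsL]
    refine List.Nodup.append ?_ (nodup_bigPathsL f ts (k + 1)) ?_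
    · exact (nodup_bigPaths f t).map (fun a b h => by simpa using h)
    · intro p hp hp'
      obtain ⟨q, _, hpe⟩ := List.mem_map.mp hp
      obtain ⟨n, q', s, hpe', _⟩ := (mem_bigPathsL f ts (k + 1) p).mp hp'
      rw [← hpe] at hpe'
      have : k = k + 1 + n := by exact (List.cons.injEq _ _ _ _).mp hpe' |>.1
      omega
end

mutual
theorem len_bigPaths (f : ℕ) (hf : 1 ≤ f) (t : OTree) :
    f * (bigPaths f t).length ≤ (height t + 1) * numNodes t := by
  obtain ⟨ts⟩ := t
  rw [bigPaths]
  have hL := len_bigPathsL f hf ts 0 (height (.node ts)) (fun t ht => height_child_le ht)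
  have hsum : 1 + (ts.map numNodes).sum = numNodes (.node ts) := (numNodes_node ts).symm
  have hb : f * (if f < numNodes (.node ts) then [([] : List ℕ)] else []).length ≤
      numNodes (.node ts) := by
    split
    · simpa using (by omega : f ≤ numNodes (.node ts))
    · simp
  rw [List.length_append, Nat.mul_add]
  calc f * (if f < numNodes (.node ts) then [([] : List ℕ)] else []).length
        + f * (bigPathsL f ts 0).length
      ≤ numNodes (.node ts) + height (.node ts) * (ts.map numNodes).sum :=
        Nat.add_le_add hb hL
    _ ≤ numNodes (.node ts) + height (.node ts) * numNodes (.node ts) := by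
        have : (ts.map numNodes).sum ≤ numNodes (.node ts) := by omega
        exact Nat.add_le_add_left (Nat.mul_le_mul_left _ this) _
    _ = (height (.node ts) + 1) * numNodes (.node ts) := by ring

theorem len_bigPathsL (f : ℕ) (hf : 1 ≤ f) (ts : List OTree) (k : ℕ) (H : ℕ)
    (hH : ∀ t ∈ ts, height t + 1 ≤ H) :
    f * (bigPathsL f ts k).length ≤ H * (ts.map numNodes).sum := by
  match ts with
  | [] => simp [bigPathsL]
  | t :: ts =>
    rw [bigPathsL]
    have h1 := len_bigPaths f hf t
    have h2 := len_bigPathsL f hf ts (k + 1) H (fun u hu => hH u (List.mem_cons_of_mem _ hu))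
    have h3 : (height t + 1) * numNodes t ≤ H * numNodes t :=
      Nat.mul_le_mul_right _ (hH t List.mem_cons_self)
    rw [List.length_append, Nat.mul_add, List.length_map]
    calc f * (bigPaths f t).length + f * (bigPathsL f ts (k + 1)).length
        ≤ H * numNodes t + H * (ts.map numNodes).sum :=
          Nat.add_le_add (le_trans h1 h3) h2
      _ = H * ((t :: ts).map numNodes).sum := by simp [Nat.mul_add]

end

/-- for a tree `T` with `N` nodes and height `H`, and `f ≥ 1`,
`f · |{v : subtree rooted at v has more than f nodes}| ≤ (H+1)·N`. -/
theorem stmt13 (T : OTree) (f : ℕ) (hf : 1 ≤ f) :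
    f * {p : List ℕ | ∃ t, subtreeAt T p = some t ∧ f < numNodes t}.ncard ≤
      (height T + 1) * numNodes T := by
  have hset : {p : List ℕ | ∃ t, subtreeAt T p = some t ∧ f < numNodes t}
      = ↑(bigPaths f T).toFinset := by
    ext p
    simp [mem_bigPaths f T p]
  rw [hset, Set.ncard_coe_finset, List.toFinset_card_of_nodup (nodup_bigPaths f T)]
  exact len_bigPaths f hf T
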